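/- Let s > 0, κ > 0 and A > 0. Suppose E : ℝ → ℝ is differentiable on [0,∞) with E(t) ≥ 0 and E(0) > 0, D : ℝ → ℝ satisfies D(t) ≥ 0, and for all t ≥ 0 one has E′(t) + κ·D(t) ≤ 0 and E(t) ≤ A·D(t)^{s/(1+s)}. Then for all t ≥ 0, E(t) ≤ ( E(0)^{−1/s} + (κ/s)·A^{−(1+s)/s}·t )^{−s}. -/

import Mathlib

/-- Nonlinear ODE decay: from `E′ + κD ≤ 0` and the interpolation bound
`E ≤ A D^{s/(1+s)}`, the energy decays at the algebraic rate `t^{-s}`. -/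
theorem stmt15 (s κ A : ℝ) (hs : 0 < s) (hκ : 0 < κ) (hA : 0 < A)
    (E E' D : ℝ → ℝ)
    (hderiv : ∀ t ≥ (0 : ℝ), HasDerivWithinAt E (E' t) (Set.Ici 0) t)
    (hEnonneg : ∀ t ≥ (0 : ℝ), 0 ≤ E t)
    (hE0 : 0 < E 0)
    (hDnonneg : ∀ t ≥ (0 : ℝ), 0 ≤ D t)
    (hineq : ∀ t ≥ (0 : ℝ), E' t + κ * D t ≤ 0)
    (hinterp : ∀ t ≥ (0 : ℝ), E t ≤ A * D t ^ (s/(1+s))) :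
    ∀ t ≥ (0 : ℝ),
      E t ≤ (E 0 ^ (-(1/s)) + (κ/s) * A ^ (-((1+s)/s)) * t) ^ (-s) := by
  intro t ht
  set c : ℝ := κ * A ^ (-((1+s)/s)) with hc
  have hcpos : 0 < c := mul_pos hκ (Real.rpow_pos_of_pos hA _)
  have h1s : 0 < 1 + s := by linarith
  have hcs : (κ/s) * A ^ (-((1+s)/s)) = c/s := by rw [hc]; ring
  rw [hcs]
  have hBpos : 0 < E 0 ^ (-(1/s)) + c/s * t := by
    have h1 : 0 < E 0 ^ (-(1/s)) := Real.rpow_pos_of_pos hE0 _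
    have h2 : 0 ≤ c/s * t := by positivity
    linarith
  -- E is antitone on [0,∞)
  have hcontE : ContinuousOn E (Set.Ici 0) := fun u hu =>
    (hderiv u hu).continuousWithinAt
  have hanti : AntitoneOn E (Set.Ici 0) := by
    refine antitoneOn_of_hasDerivWithinAt_nonpos (f' := E') (convex_Ici 0) hcontE
      (fun u hu => ?_) (fun u hu => ?_)
    · rw [interior_Ici] at hu ⊢
      exact (hderiv u (le_of_lt hu)).mono Set.Ioi_subset_Ici_self
    · rw [interior_Ici] at hu
      have h1 := hineq u (le_of_lt hu)
      have h2 := hDnonneg u (le_of_lt hu)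
      nlinarith
  -- key differential inequality: E' u ≤ -c * E u ^ ((1+s)/s)
  have hkey : ∀ u ≥ (0:ℝ), E' u ≤ -c * E u ^ ((1+s)/s) := by
    intro u hu
    have hD := hDnonneg u hu
    have hE := hEnonneg u hu
    have hApos : 0 < A ^ ((1+s)/s) := Real.rpow_pos_of_pos hA _
    have h2 : E u ^ ((1+s)/s) ≤ A ^ ((1+s)/s) * D u := by
      calc E u ^ ((1+s)/s) ≤ (A * D u ^ (s/(1+s))) ^ ((1+s)/s) :=
            Real.rpow_le_rpow hE (hinterp u hu) (le_of_lt (div_pos h1s hs))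
        _ = A ^ ((1+s)/s) * (D u ^ (s/(1+s))) ^ ((1+s)/s) :=
            Real.mul_rpow (le_of_lt hA) (Real.rpow_nonneg hD _)
        _ = A ^ ((1+s)/s) * D u := by
            rw [← Real.rpow_mul hD, show s/(1+s) * ((1+s)/s) = 1 by field_simp,
              Real.rpow_one]
    have h3 : c * E u ^ ((1+s)/s) ≤ κ * D u := by
      have hAneg : A ^ (-((1+s)/s)) = (A ^ ((1+s)/s))⁻¹ :=
        Real.rpow_neg (le_of_lt hA) _
      rw [hc, hAneg]
      have h4 : (A ^ ((1+s)/s))⁻¹ * E u ^ ((1+s)/s) ≤ D u := by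
        rw [inv_mul_le_iff₀ hApos]
        linarith [h2]
      calc κ * (A ^ ((1+s)/s))⁻¹ * E u ^ ((1+s)/s)
          = κ * ((A ^ ((1+s)/s))⁻¹ * E u ^ ((1+s)/s)) := by ring
        _ ≤ κ * D u := mul_le_mul_of_nonneg_left h4 (le_of_lt hκ)
    have h5 := hineq u hu
    nlinarith
  -- if E t = 0 the conclusion is immediate
  rcases (hEnonneg t ht).eq_or_lt with hEt | hEt
  · rw [← hEt]
    exact le_of_lt (Real.rpow_pos_of_pos hBpos _)
  -- otherwise E > 0 on [0, t]
  have hEposIcc : ∀ u ∈ Set.Icc (0:ℝ) t, 0 < E u := by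
    intro u hu
    exact lt_of_lt_of_le hEt (hanti hu.1 ht hu.2)
  -- consider φ u = E u ^ (-(1/s)) - (c/s) * u, monotone on [0, t]
  set φ : ℝ → ℝ := fun u => E u ^ (-(1/s)) - c/s * u with hφ
  have hmono : MonotoneOn φ (Set.Icc 0 t) := by
    refine monotoneOn_of_hasDerivWithinAt_nonneg (convex_Icc 0 t)
      (f' := fun u => E' u * (-(1/s)) * E u ^ (-(1/s) - 1) - c/s)
      ?_ (fun u hu => ?_) (fun u hu => ?_)
    · apply ContinuousOn.sub
      · apply ContinuousOn.rpow_const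
        · exact hcontE.mono (fun x hx => hx.1)
        · intro x hx
          exact Or.inl (ne_of_gt (hEposIcc x hx))
      · exact (continuousOn_const.mul continuousOn_id)
    · rw [interior_Icc] at hu ⊢
      have hdE : HasDerivWithinAt E (E' u) (Set.Ioo 0 t) u :=
        (hderiv u (le_of_lt hu.1)).mono (fun x hx => le_of_lt hx.1)
      have hne : E u ≠ 0 := ne_of_gt (hEposIcc u ⟨le_of_lt hu.1, le_of_lt hu.2⟩)
      have h1 := (hdE.rpow_const (p := -(1/s)) (Or.inl hne)).sub
        (((hasDerivWithinAt_id u (Set.Ioo 0 t)).const_mul (c/s)))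
      exact h1.congr_deriv (by ring)
    · rw [interior_Icc] at hu
      show 0 ≤ E' u * (-(1/s)) * E u ^ (-(1/s) - 1) - c/s
      have hEu : 0 < E u := hEposIcc u ⟨le_of_lt hu.1, le_of_lt hu.2⟩
      have h6 := hkey u (le_of_lt hu.1)
      -- -E' u * E u ^ (-(1/s)-1) ≥ c
      have h7 : c ≤ -E' u * E u ^ (-(1/s) - 1) := by
        have h8 : c * (E u ^ ((1+s)/s) * E u ^ (-(1/s) - 1))
            ≤ -E' u * E u ^ (-(1/s) - 1) := by
          have h9 : 0 ≤ E u ^ (-(1/s) - 1) := le_of_lt (Real.rpow_pos_of_pos hEu _)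
          nlinarith
        have h10 : E u ^ ((1+s)/s) * E u ^ (-(1/s) - 1) = 1 := by
          rw [← Real.rpow_add hEu, show (1+s)/s + (-(1/s) - 1) = 0 by field_simp; ring,
            Real.rpow_zero]
        rw [h10, mul_one] at h8
        exact h8
      have h11 : E' u * (-(1/s)) * E u ^ (-(1/s) - 1)
          = (1/s) * (-E' u * E u ^ (-(1/s) - 1)) := by ring
      rw [h11]
      have h12 : c/s ≤ (1/s) * (-E' u * E u ^ (-(1/s) - 1)) := by
        rw [div_le_iff₀ hs] at *
        calc c ≤ -E' u * E u ^ (-(1/s) - 1) := h7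
          _ = (1/s) * (-E' u * E u ^ (-(1/s) - 1)) * s := by field_simp
      linarith
  have hφ01 : φ 0 ≤ φ t := hmono (Set.left_mem_Icc.mpr ht) (Set.right_mem_Icc.mpr ht) ht
  have hφ0 : φ 0 = E 0 ^ (-(1/s)) := by simp [hφ]
  have key : E 0 ^ (-(1/s)) + c/s * t ≤ E t ^ (-(1/s)) := by
    have := hφ01
    rw [hφ0] at this
    simp only [hφ] at this
    linarith
  have hstep : (E t ^ (-(1/s))) ^ (-s) ≤ (E 0 ^ (-(1/s)) + c/s * t) ^ (-s) :=
    Real.rpow_le_rpow_of_nonpos hBpos key (by linarith)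
  calc E t = (E t ^ (-(1/s))) ^ (-s) := by
        rw [← Real.rpow_mul (le_of_lt hEt), show -(1/s) * -s = 1 by field_simp,
          Real.rpow_one]
    _ ≤ (E 0 ^ (-(1/s)) + c/s * t) ^ (-s) := hstep
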